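/- For every integer d ≥ 1, the sum of the squared cosecants at the d-th division points of π satisfies ∑_{h=1}^{d-1} (1 / sin(hπ/d))² = (d² − 1)/3. -/

import Mathlib

open Real Finset

/-!
For `ω = exp (2ix)` one has `(1 - ω)² = -4 ω sin² x`, so with `ζ = exp (2πi/d)` the term at `h` is
`-4 ω / (1 - ω)²` for the nontrivial root of unity `ω = ζ ^ h`. Since `(1 - ω) P(ω) = -d` for
`P(X) = ∑_{j<d} (j + 1) X^j`, this equals `-4 ω P(ω)² / d²`, a polynomial in `ω`. Summed over all
`h < d`, orthogonality of the characters `h ↦ ζ^{hm}` keeps only the products of coefficients with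
`j + k + 1 = d`, which gives `d ∑_{j<d} (j + 1)(d - j) = d²(d + 1)(d + 2)/6`; removing the term
`h = 0`, namely `(d(d + 1)/2)²`, leaves `-d²(d² - 1)/12`.
-/

theorem Complex.one_sub_exp_two_mul_I_sq (x : ℂ) :
    (1 - Complex.exp (2 * x * Complex.I)) ^ 2
      = -4 * Complex.sin x ^ 2 * Complex.exp (2 * x * Complex.I) := by
  set w := Complex.exp (x * Complex.I)
  set w' := Complex.exp (-x * Complex.I)
  have hsq : Complex.exp (2 * x * Complex.I) = w ^ 2 := by
    rw [← Complex.exp_nat_mul]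
    push_cast
    ring_nf
  have hinv : w * w' = 1 := by
    rw [← Complex.exp_add]
    simp
  have hsin : Complex.sin x = (w' - w) * Complex.I / 2 := by
    linear_combination Complex.two_sin x / 2
  rw [hsq, hsin]
  linear_combination (w' - w) ^ 2 * w ^ 2 * Complex.I_sq - (1 + w * w' - 2 * w ^ 2) * hinv

theorem Complex.inv_sin_sq_eq {x : ℂ} (hx : Complex.exp (2 * x * Complex.I) ≠ 1) :
    (Complex.sin x ^ 2)⁻¹
      = -4 * Complex.exp (2 * x * Complex.I) * ((1 - Complex.exp (2 * x * Complex.I)) ^ 2)⁻¹ := by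
  have hsq := Complex.one_sub_exp_two_mul_I_sq x
  have hsin : Complex.sin x ≠ 0 := by
    intro h
    have hzero : (1 - Complex.exp (2 * x * Complex.I)) ^ 2 = 0 := by
      rw [hsq, h]
      ring
    exact hx (sub_eq_zero.1 (pow_eq_zero_iff two_ne_zero |>.1 hzero)).symm
  rw [hsq]
  field_simp [Complex.exp_ne_zero]

theorem geom_sum_eq_zero_of_pow_eq_one {R : Type*} [CommRing R] [IsDomain R] {ω : R} {n : ℕ}
    (hωn : ω ^ n = 1) (hω : ω ≠ 1) : ∑ i ∈ range n, ω ^ i = 0 := by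
  have h := mul_neg_geom_sum ω n
  rw [hωn, sub_self] at h
  exact (mul_eq_zero.1 h).resolve_left (sub_ne_zero.2 hω.symm)

theorem one_sub_mul_sum_range_cast_add_one_mul_pow {R : Type*} [CommRing R] (x : R) (n : ℕ) :
    (1 - x) * ∑ k ∈ range n, ((k : R) + 1) * x ^ k = ∑ k ∈ range n, x ^ k - n * x ^ n := by
  induction n with
  | zero => simp
  | succ n ih =>
    rw [sum_range_succ, sum_range_succ]
    push_cast
    linear_combination ih

theorem inv_one_sub_sq_eq_of_pow_eq_one {K : Type*} [Field K] {ω : K} {d : ℕ}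
    (hωd : ω ^ d = 1) (hω : ω ≠ 1) (hd : (d : K) ≠ 0) :
    ((1 - ω) ^ 2)⁻¹ = (∑ k ∈ range d, ((k : K) + 1) * ω ^ k) ^ 2 / d ^ 2 := by
  have key : (1 - ω) * ∑ k ∈ range d, ((k : K) + 1) * ω ^ k = -d := by
    rw [one_sub_mul_sum_range_cast_add_one_mul_pow, geom_sum_eq_zero_of_pow_eq_one hωd hω, hωd]
    ring
  field_simp
  linear_combination (d - (1 - ω) * ∑ k ∈ range d, ((k : K) + 1) * ω ^ k) * key

theorem one_div_sin_nat_mul_pi_div_sq {ζ : ℂ} {d h : ℕ}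
    (hζ : ζ = Complex.exp (2 * π * Complex.I / d)) (h0 : 0 < h) (hhd : h < d) :
    (1 / Complex.sin (h * π / d)) ^ 2
      = -4 / d ^ 2 * (ζ ^ h * (∑ j ∈ range d, ((j : ℂ) + 1) * (ζ ^ h) ^ j) ^ 2) := by
  have hprim : IsPrimitiveRoot ζ d := hζ ▸ Complex.isPrimitiveRoot_exp d (by omega)
  have hexp : ζ ^ h = Complex.exp (2 * (h * π / d : ℂ) * Complex.I) := by
    rw [hζ, ← Complex.exp_nat_mul]
    congr 1
    ring
  have hne : ζ ^ h ≠ 1 := hprim.pow_ne_one_of_pos_of_lt (by omega) hhd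
  have hpow : (ζ ^ h) ^ d = 1 := by rw [pow_right_comm, hprim.pow_eq_one, one_pow]
  rw [one_div, inv_pow, Complex.inv_sin_sq_eq (hexp ▸ hne), ← hexp,
    inv_one_sub_sq_eq_of_pow_eq_one hpow hne (Nat.cast_ne_zero.2 (by omega))]
  ring

theorem IsPrimitiveRoot.sum_range_pow_pow {R : Type*} [CommRing R] [IsDomain R] {ζ : R} {d : ℕ}
    (hζ : IsPrimitiveRoot ζ d) (m : ℕ) :
    ∑ h ∈ range d, (ζ ^ m) ^ h = if d ∣ m then (d : R) else 0 := by
  split_ifs with hm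
  · simp [(hζ.pow_eq_one_iff_dvd m).2 hm]
  · exact geom_sum_eq_zero_of_pow_eq_one (by rw [pow_right_comm, hζ.pow_eq_one, one_pow])
      fun h => hm ((hζ.pow_eq_one_iff_dvd m).1 h)

theorem Nat.dvd_add_add_one_iff {d j k : ℕ} (hj : j < d) (hk : k < d) :
    d ∣ j + k + 1 ↔ d - 1 - j = k := by
  constructor
  · intro h
    have := Nat.eq_of_dvd_of_lt_two_mul (by omega) h (by omega)
    omega
  · intro h
    exact ⟨1, by omega⟩

theorem IsPrimitiveRoot.sum_pow_mul_sum_sq {R : Type*} [CommRing R] [IsDomain R] {ζ : R} {d : ℕ}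
    (hζ : IsPrimitiveRoot ζ d) (a : ℕ → R) :
    ∑ h ∈ range d, ζ ^ h * (∑ j ∈ range d, a j * (ζ ^ h) ^ j) ^ 2
      = d * ∑ j ∈ range d, a j * a (d - 1 - j) := by
  have hpow : ∀ h j k : ℕ, ζ ^ h * (a j * (ζ ^ h) ^ j * (a k * (ζ ^ h) ^ k))
      = a j * a k * (ζ ^ (j + k + 1)) ^ h := fun _ _ _ => by ring
  calc ∑ h ∈ range d, ζ ^ h * (∑ j ∈ range d, a j * (ζ ^ h) ^ j) ^ 2
      = ∑ j ∈ range d, ∑ k ∈ range d, a j * a k * ∑ h ∈ range d, (ζ ^ (j + k + 1)) ^ h := by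
        simp only [sq, sum_mul_sum]
        simp only [mul_sum, hpow]
        exact sum_comm.trans (sum_congr rfl fun j _ => sum_comm)
    _ = ∑ j ∈ range d, ∑ k ∈ range d, if d - 1 - j = k then a j * a k * d else 0 := by
        refine sum_congr rfl fun j hj => sum_congr rfl fun k hk => ?_
        simp only [hζ.sum_range_pow_pow, Nat.dvd_add_add_one_iff (mem_range.1 hj) (mem_range.1 hk),
          mul_ite, mul_zero]
    _ = d * ∑ j ∈ range d, a j * a (d - 1 - j) := by
        rw [mul_sum]
        refine sum_congr rfl fun j hj => ?_
        rw [sum_ite_eq, if_pos (mem_range.2 (by have := mem_range.1 hj; omega))]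
        ring

theorem two_mul_sum_range_cast_add_one {R : Type*} [CommSemiring R] (n : ℕ) :
    2 * ∑ j ∈ range n, ((j : R) + 1) = n * (n + 1) := by
  induction n with
  | zero => simp
  | succ n ih =>
    rw [sum_range_succ, mul_add, ih]
    push_cast
    ring

theorem six_mul_sum_range_cast_add_one_mul_sub {R : Type*} [CommRing R] (n : ℕ) :
    6 * ∑ j ∈ range n, ((j : R) + 1) * (n - j) = n * (n + 1) * (n + 2) := by
  induction n with
  | zero => simp
  | succ n ih =>
    have hshift : ∑ j ∈ range n, ((j : R) + 1) * ((n + 1 : ℕ) - j)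
        = ∑ j ∈ range n, ((j : R) + 1) * (n - j) + ∑ j ∈ range n, ((j : R) + 1) := by
      rw [← sum_add_distrib]
      exact sum_congr rfl fun j _ => by push_cast; ring
    rw [sum_range_succ, hshift]
    push_cast
    linear_combination ih + 3 * two_mul_sum_range_cast_add_one (R := R) n

theorem six_mul_sum_range_cast_add_one_mul_reflect {R : Type*} [CommRing R] (n : ℕ) :
    6 * ∑ j ∈ range n, ((j : R) + 1) * (((n - 1 - j : ℕ) : R) + 1) = n * (n + 1) * (n + 2) := by
  rw [← six_mul_sum_range_cast_add_one_mul_sub n]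
  congr 1
  refine sum_congr rfl fun j hj => ?_
  rw [Nat.sub_sub, Nat.cast_sub (by have := mem_range.1 hj; omega)]
  push_cast
  ring

theorem sum_cosec_sq (d : ℕ) (hd : 1 ≤ d) :
    ∑ h ∈ Finset.Ico 1 d, (1 / Real.sin (h * Real.pi / d)) ^ 2
      = ((d : ℝ) ^ 2 - 1) / 3 := by
  set ζ := Complex.exp (2 * π * Complex.I / d) with hζ_def
  have hζ : IsPrimitiveRoot ζ d := Complex.isPrimitiveRoot_exp d (by omega)
  have htotal := hζ.sum_pow_mul_sum_sq (fun j => (j : ℂ) + 1)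
  rw [← sum_range_add_sum_Ico _ hd, sum_range_one] at htotal
  simp only [pow_zero, one_pow, mul_one, one_mul] at htotal
  have h2 := two_mul_sum_range_cast_add_one (R := ℂ) d
  have h6 := six_mul_sum_range_cast_add_one_mul_reflect (R := ℂ) d
  have hd0 : (d : ℂ) ≠ 0 := Nat.cast_ne_zero.2 (by omega)
  apply Complex.ofReal_injective
  push_cast
  rw [sum_congr rfl fun h hh => one_div_sin_nat_mul_pi_div_sq hζ_def (mem_Ico.1 hh).1
    (mem_Ico.1 hh).2, ← mul_sum]
  field_simp
  linear_combination
    (-12) * htotal - 2 * d * h6 + 3 * (2 * ∑ j ∈ range d, ((j : ℂ) + 1) + d * (d + 1)) * h2
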